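/- Let K be an imaginary quadratic field with ring of integers R, ℓ a prime, c a positive integer coprime to ℓ, and n ≥ 1. Then the set {x ∈ K : (ℓ·ℤ + cℓ^n·R)·x ⊆ 𝒪_{cℓ^n}} equals 𝒪_{cℓ^{n-1}}. Consequently the (ℓℤ + cℓ^nR)-torsion of K/𝒪_{cℓ^n} is 𝒪_{cℓ^{n-1}}/𝒪_{cℓ^n}, a group of order ℓ. -/

import Mathlib

set_option synthInstance.maxHeartbeats 1000000
set_option maxHeartbeats 1000000

open NumberField Pointwise

/-- The order of conductor `f` in a field `K`: the subring `ℤ + f·𝓞_K` of `K`,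
generated over `ℤ` by the set `f • 𝓞_K` (whose `ℤ`-span together with `1` it equals). -/
noncomputable def ringOrder (K : Type*) [Field K] (f : ℕ) : Subalgebra ℤ K :=
  Algebra.adjoin ℤ ((f : K) • (integralClosure ℤ K : Set K))

/-- The `ℤ`-span of `ℓ` and `cℓ^n·𝓞_K` inside `K` (the ideal `ℓ_n` of the paper). -/
noncomputable def ellIdeal (K : Type*) [Field K] (ℓ c n : ℕ) : Submodule ℤ K :=
  Submodule.span ℤ
    (insert ((ℓ : K)) (((c : K) * (ℓ : K) ^ n) • (integralClosure ℤ K : Set K)))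

/-!
For a quadratic field, `1` is part of a `ℤ`-basis `1, ω` of `𝓞 K`: a common divisor `d` of the
coordinates of `1` in any basis is a unit of `𝓞 K`, hence `d ^ 2 = N(d)` is a unit of `ℤ`.
Then `𝒪_f = ℤ ⊕ ℤ fω`, i.e. `a + bω ∈ 𝒪_f ↔ f ∣ b`. Put `f = cℓ^(n-1)`. Since
`ℓ (a + f y) = ℓ a + fℓ y`, the ideal `ℓ_n = ℓℤ + fℓ𝓞 K` maps `𝒪_f` into `𝒪_{fℓ}`. Conversely, if
`ℓ x = a + b fℓω` and `fℓω x ∈ 𝒪_{fℓ}`, then removing `fℓω · b fω ∈ fℓ 𝓞 K` leaves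
`a fω ∈ 𝒪_{fℓ}`, so `ℓ ∣ a` and `x ∈ 𝒪_f`. In the coordinates `(a, b)` the inclusion
`𝒪_{fℓ} ⊆ 𝒪_f` is `ℤ × fℓℤ ⊆ ℤ × fℤ`, of index `ℓ`.
-/

namespace NumberField

variable {K : Type*} [Field K] [NumberField K]

namespace RingOfIntegers

theorem isRelPrime_repr_one (b : Module.Basis (Fin 2) ℤ (𝓞 K)) :
    IsRelPrime (b.repr 1 0) (b.repr 1 1) := by
  rintro d ⟨p, hp⟩ ⟨q, hq⟩
  have h1 : (d : 𝓞 K) * (p * b 0 + q * b 1) = 1 := by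
    conv_rhs => rw [← b.sum_repr 1]
    simp only [Fin.sum_univ_two, hp, hq, zsmul_eq_mul]
    push_cast
    ring
  have hunit := (IsUnit.of_mul_eq_one _ h1).map (Algebra.norm ℤ)
  rwa [← eq_intCast (algebraMap ℤ (𝓞 K)), Algebra.norm_algebraMap,
    Module.finrank_eq_card_basis b, Fintype.card_fin, isUnit_pow_iff two_ne_zero] at hunit

theorem exists_eq_intCast_add_mul (hdeg : Module.finrank ℚ K = 2) :
    ∃ ω : 𝓞 K, (∀ x : 𝓞 K, ∃ a b : ℤ, x = a + b * ω) ∧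
      ∀ a b : ℤ, (a : 𝓞 K) + b * ω = 0 → a = 0 ∧ b = 0 := by
  let b : Module.Basis (Fin 2) ℤ (𝓞 K) :=
    (Module.finBasis ℤ (𝓞 K)).reindex (finCongr ((RingOfIntegers.rank K).trans hdeg))
  have hrepr (x : 𝓞 K) : x = b.repr x 0 * b 0 + b.repr x 1 * b 1 := by
    conv_lhs => rw [← b.sum_repr x]
    simp [Fin.sum_univ_two, zsmul_eq_mul]
  set p := b.repr 1 0
  set q := b.repr 1 1
  obtain ⟨u, v, huv⟩ := (isRelPrime_repr_one b).isCoprime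
  have huv' : (u * p + v * q : 𝓞 K) = 1 := by exact_mod_cast huv
  -- `1, ω` arise from `b 0, b 1` through the matrix `!![p, q; -v, u]` of determinant `1`.
  refine ⟨-v * b 0 + u * b 1, fun x => ?_, fun a c h => ?_⟩
  · refine ⟨b.repr x 0 * u + b.repr x 1 * v, b.repr x 1 * p - b.repr x 0 * q, ?_⟩
    push_cast
    linear_combination hrepr x - (b.repr x 0 * u + b.repr x 1 * v) * hrepr 1
      - (b.repr x 0 * b 0 + b.repr x 1 * b 1) * huv'
  · have hcoord := Fintype.linearIndependent_iff.mp b.linearIndependent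
      ![a * p - c * v, a * q + c * u] (by
        simp only [Fin.sum_univ_two, Fin.isValue, Matrix.cons_val_zero, Matrix.cons_val_one,
          Matrix.cons_val_fin_one, zsmul_eq_mul, Int.cast_sub, Int.cast_add, Int.cast_mul]
        linear_combination h - a * hrepr 1)
    have h0 : a * p - c * v = 0 := by simpa using hcoord 0
    have h1 : a * q + c * u = 0 := by simpa using hcoord 1
    constructor
    · linear_combination u * h0 + v * h1 - a * huv
    · linear_combination p * h1 - q * h0 - c * huv

end RingOfIntegers

theorem exists_integralClosure_eq_intCast_add_mul (hdeg : Module.finrank ℚ K = 2) :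
    ∃ ω : K, (∀ x : K, x ∈ integralClosure ℤ K ↔ ∃ a b : ℤ, x = a + b * ω) ∧
      ∀ a b : ℤ, (a : K) + b * ω = 0 → a = 0 ∧ b = 0 := by
  obtain ⟨ω, hspan, hind⟩ := RingOfIntegers.exists_eq_intCast_add_mul hdeg
  refine ⟨ω, fun x => ⟨fun hx => ?_, ?_⟩,
    fun a b h => hind a b (RingOfIntegers.coe_injective (by simpa using h))⟩
  · obtain ⟨a, b, h⟩ := hspan ⟨x, hx⟩
    exact ⟨a, b, by simpa using congrArg ((↑) : 𝓞 K → K) h⟩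
  · rintro ⟨a, b, rfl⟩
    exact (a + b * ω : 𝓞 K).2

end NumberField

section ringOrder

variable {K : Type*} [Field K]

theorem mem_ringOrder_iff {f : ℕ} {x : K} :
    x ∈ ringOrder K f ↔ ∃ a : ℤ, ∃ y ∈ integralClosure ℤ K, x = a + f * y := by
  refine ⟨fun hx => ?_, ?_⟩
  · induction hx using Algebra.adjoin_induction with
    | mem x hx =>
      obtain ⟨y, hy, rfl⟩ := hx
      exact ⟨0, y, hy, by simp⟩
    | algebraMap a => exact ⟨a, 0, zero_mem _, by simp⟩
    | add x x' _ _ hx hx' =>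
      obtain ⟨a, y, hy, rfl⟩ := hx
      obtain ⟨a', y', hy', rfl⟩ := hx'
      exact ⟨a + a', y + y', add_mem hy hy', by push_cast; ring⟩
    | mul x x' _ _ hx hx' =>
      obtain ⟨a, y, hy, rfl⟩ := hx
      obtain ⟨a', y', hy', rfl⟩ := hx'
      refine ⟨a * a', a * y' + a' * y + f * y * y', ?_, by push_cast; ring⟩
      exact add_mem (add_mem (mul_mem (intCast_mem _ a) hy') (mul_mem (intCast_mem _ a') hy))
        (mul_mem (mul_mem (natCast_mem _ f) hy) hy')
  · rintro ⟨a, y, hy, rfl⟩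
    exact add_mem (intCast_mem _ a) (Algebra.subset_adjoin ⟨y, hy, rfl⟩)

theorem natCast_mul_mem_ringOrder {f : ℕ} {y : K} (hy : y ∈ integralClosure ℤ K) :
    (f : K) * y ∈ ringOrder K f :=
  Algebra.subset_adjoin ⟨y, hy, rfl⟩

theorem ringOrder_le_integralClosure (f : ℕ) : ringOrder K f ≤ integralClosure ℤ K :=
  Algebra.adjoin_le <| by
    rintro _ ⟨y, hy, rfl⟩
    exact mul_mem (natCast_mem _ f) hy

theorem natCast_mul_mem_ringOrder_mul {f ℓ : ℕ} {x : K} (hx : x ∈ ringOrder K f) :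
    (ℓ : K) * x ∈ ringOrder K (f * ℓ) := by
  obtain ⟨a, y, hy, rfl⟩ := mem_ringOrder_iff.mp hx
  exact mem_ringOrder_iff.mpr ⟨ℓ * a, y, hy, by push_cast; ring⟩

theorem mul_mem_ringOrder_of_mem_ellIdeal {ℓ c m : ℕ} {x y : K}
    (hx : x ∈ ringOrder K (c * ℓ ^ m)) (hy : y ∈ ellIdeal K ℓ c (m + 1)) :
    y * x ∈ ringOrder K (c * ℓ ^ m * ℓ) := by
  induction hy using Submodule.span_induction with
  | mem y hy =>
    rcases hy with rfl | ⟨z, hz, rfl⟩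
    · exact natCast_mul_mem_ringOrder_mul hx
    · have := natCast_mul_mem_ringOrder (f := c * ℓ ^ m * ℓ)
        (mul_mem hz (ringOrder_le_integralClosure _ hx))
      convert this using 1
      push_cast
      ring
  | zero => simp
  | add y y' _ _ hy hy' =>
    rw [add_mul]
    exact add_mem hy hy'
  | smul r y _ hy =>
    rw [smul_mul_assoc]
    exact zsmul_mem hy r

end ringOrder

section IntegralBasis

variable {K : Type*} [Field K] {ω : K}

theorem mem_ringOrder_iff_exists_int
    (hO : ∀ x : K, x ∈ integralClosure ℤ K ↔ ∃ a b : ℤ, x = a + b * ω) {f : ℕ} {x : K} :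
    x ∈ ringOrder K f ↔ ∃ a b : ℤ, x = a + b * (f * ω) := by
  rw [mem_ringOrder_iff]
  constructor
  · rintro ⟨a, y, hy, rfl⟩
    obtain ⟨a', b', rfl⟩ := (hO y).mp hy
    exact ⟨a + f * a', b', by push_cast; ring⟩
  · rintro ⟨a, b, rfl⟩
    exact ⟨a, b * ω, (hO _).mpr ⟨0, b, by simp⟩, by ring⟩

theorem intCast_add_mul_mem_ringOrder_iff
    (hO : ∀ x : K, x ∈ integralClosure ℤ K ↔ ∃ a b : ℤ, x = a + b * ω)
    (hind : ∀ a b : ℤ, (a : K) + b * ω = 0 → a = 0 ∧ b = 0) {f : ℕ} {a b : ℤ} :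
    (a : K) + b * ω ∈ ringOrder K f ↔ (f : ℤ) ∣ b := by
  rw [mem_ringOrder_iff_exists_int hO]
  constructor
  · rintro ⟨a', b', h⟩
    have := (hind (a - a') (b - f * b') (by push_cast; linear_combination h)).2
    exact ⟨b', by linear_combination this⟩
  · rintro ⟨b', rfl⟩
    exact ⟨a, b', by push_cast; ring⟩

theorem mem_ringOrder_of_mul_mem
    (hO : ∀ x : K, x ∈ integralClosure ℤ K ↔ ∃ a b : ℤ, x = a + b * ω)
    (hind : ∀ a b : ℤ, (a : K) + b * ω = 0 → a = 0 ∧ b = 0) [CharZero K] {f ℓ : ℕ} (hf : f ≠ 0)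
    (hℓ : ℓ ≠ 0) {x : K} (hℓx : (ℓ : K) * x ∈ ringOrder K (f * ℓ))
    (hωx : ((f * ℓ : ℕ) : K) * ω * x ∈ ringOrder K (f * ℓ)) :
    x ∈ ringOrder K f := by
  obtain ⟨a, b, hx⟩ := (mem_ringOrder_iff_exists_int hO).mp hℓx
  have hω : ω ∈ integralClosure ℤ K := (hO ω).mpr ⟨0, 1, by simp⟩
  have hωω : ((f * ℓ : ℕ) : K) * (b * f * ω * ω) ∈ ringOrder K (f * ℓ) :=
    natCast_mul_mem_ringOrder
      (mul_mem (mul_mem (mul_mem (intCast_mem _ b) (natCast_mem _ f)) hω) hω)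
  have hfa : ((0 : ℤ) : K) + ((f * a : ℤ) : K) * ω ∈ ringOrder K (f * ℓ) := by
    convert sub_mem hωx hωω using 1
    push_cast at hx ⊢
    linear_combination (-(f : K) * ω) * hx
  obtain ⟨d, hd⟩ := (intCast_add_mul_mem_ringOrder_iff hO hind).mp hfa
  have ha : a = ℓ * d := by
    apply mul_left_cancel₀ (Int.natCast_ne_zero.mpr hf)
    push_cast at hd
    linear_combination hd
  refine (mem_ringOrder_iff_exists_int hO).mpr
    ⟨d, b, mul_left_cancel₀ (Nat.cast_ne_zero.mpr hℓ) ?_⟩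
  rw [hx, ha]
  push_cast
  ring

theorem setOf_forall_mem_ellIdeal_mul_mem_ringOrder
    (hO : ∀ x : K, x ∈ integralClosure ℤ K ↔ ∃ a b : ℤ, x = a + b * ω)
    (hind : ∀ a b : ℤ, (a : K) + b * ω = 0 → a = 0 ∧ b = 0) [CharZero K] {ℓ c : ℕ} (hc : c ≠ 0)
    (hℓ : ℓ ≠ 0) (m : ℕ) :
    {x : K | ∀ y ∈ ellIdeal K ℓ c (m + 1), y * x ∈ ringOrder K (c * ℓ ^ m * ℓ)} =
      (ringOrder K (c * ℓ ^ m) : Set K) := by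
  have hω : ω ∈ integralClosure ℤ K := (hO ω).mpr ⟨0, 1, by simp⟩
  have hℓ_mem : (ℓ : K) ∈ ellIdeal K ℓ c (m + 1) := Submodule.subset_span (Set.mem_insert _ _)
  have hω_mem : ((c * ℓ ^ m * ℓ : ℕ) : K) * ω ∈ ellIdeal K ℓ c (m + 1) :=
    Submodule.subset_span (Set.mem_insert_of_mem _ ⟨ω, hω, by push_cast; ring⟩)
  ext x
  exact ⟨fun hx => mem_ringOrder_of_mul_mem hO hind (by positivity) hℓ (hx _ hℓ_mem) (hx _ hω_mem),
    fun hx _ hy => mul_mem_ringOrder_of_mem_ellIdeal hx hy⟩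

theorem relIndex_ringOrder_mul
    (hO : ∀ x : K, x ∈ integralClosure ℤ K ↔ ∃ a b : ℤ, x = a + b * ω)
    (hind : ∀ a b : ℤ, (a : K) + b * ω = 0 → a = 0 ∧ b = 0) {f : ℕ} (hf : f ≠ 0) (ℓ : ℕ) :
    AddSubgroup.relIndex (Subalgebra.toSubmodule (ringOrder K (f * ℓ))).toAddSubgroup
      (Subalgebra.toSubmodule (ringOrder K f)).toAddSubgroup = ℓ := by
  let e : ℤ × ℤ →+ K :=
    (Int.castAddHom K).coprod ((AddMonoidHom.mulRight ω).comp (Int.castAddHom K))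
  have he_apply (a b : ℤ) : e (a, b) = a + b * ω := rfl
  have he : Function.Injective e := by
    refine (injective_iff_map_eq_zero e).mpr fun ⟨a, b⟩ h => ?_
    rw [he_apply] at h
    obtain ⟨rfl, rfl⟩ := hind a b h
    rfl
  have hmap (g : ℕ) : (Subalgebra.toSubmodule (ringOrder K g)).toAddSubgroup =
      ((⊤ : AddSubgroup ℤ).prod (AddSubgroup.zmultiples (g : ℤ))).map e := by
    ext x
    simp only [Submodule.mem_toAddSubgroup, Subalgebra.mem_toSubmodule,
      mem_ringOrder_iff_exists_int hO, AddSubgroup.mem_map, AddSubgroup.mem_prod,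
      Int.mem_zmultiples_iff, Prod.exists]
    constructor
    · rintro ⟨a, b, rfl⟩
      exact ⟨a, g * b, ⟨trivial, dvd_mul_right _ _⟩, by rw [he_apply]; push_cast; ring⟩
    · rintro ⟨a, _, ⟨-, b, rfl⟩, rfl⟩
      exact ⟨a, b, by rw [he_apply]; push_cast; ring⟩
  rw [hmap, hmap, AddSubgroup.relIndex_map_map_of_injective _ _ he]
  have hle : (⊤ : AddSubgroup ℤ).prod (.zmultiples ((f * ℓ : ℕ) : ℤ)) ≤
      (⊤ : AddSubgroup ℤ).prod (.zmultiples (f : ℤ)) :=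
    AddSubgroup.prod_mono le_rfl (AddSubgroup.zmultiples_le_of_mem
      (Int.mem_zmultiples_iff.mpr ⟨ℓ, by push_cast; ring⟩))
  have := AddSubgroup.relIndex_mul_index hle
  simp only [AddSubgroup.index_prod, AddSubgroup.index_top, Int.index_zmultiples,
    Int.natAbs_natCast, one_mul] at this
  exact mul_right_cancel₀ hf (this.trans (mul_comm f ℓ))

end IntegralBasis

theorem stmt5_general (K : Type*) [Field K] [NumberField K]
    (hdeg : Module.finrank ℚ K = 2)
    (ℓ : ℕ) (hℓ : ℓ.Prime) (c : ℕ) (hc : 0 < c)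
    (n : ℕ) (hn : 1 ≤ n) :
    -- {x ∈ K : ℓ_n · x ⊆ 𝒪_{cℓ^n}} = 𝒪_{cℓ^{n-1}}
    {x : K | ∀ y ∈ ellIdeal K ℓ c n, y * x ∈ ringOrder K (c * ℓ ^ n)} =
      (ringOrder K (c * ℓ ^ (n - 1)) : Set K) ∧
    -- consequently 𝒪_{cℓ^{n-1}}/𝒪_{cℓ^n} has order ℓ
    AddSubgroup.relIndex
      (Subalgebra.toSubmodule (ringOrder K (c * ℓ ^ n))).toAddSubgroup
      (Subalgebra.toSubmodule (ringOrder K (c * ℓ ^ (n - 1)))).toAddSubgroup = ℓ := by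
  obtain ⟨m, rfl⟩ : ∃ m, n = m + 1 := ⟨n - 1, by omega⟩
  obtain ⟨ω, hO, hind⟩ := exists_integralClosure_eq_intCast_add_mul hdeg
  rw [Nat.add_sub_cancel, pow_succ, ← mul_assoc]
  exact ⟨setOf_forall_mem_ellIdeal_mul_mem_ringOrder hO hind hc.ne' hℓ.ne_zero m,
    relIndex_ringOrder_mul hO hind (mul_ne_zero hc.ne' (pow_ne_zero m hℓ.ne_zero)) ℓ⟩

theorem stmt5 (K : Type*) [Field K] [NumberField K]
    (hdeg : Module.finrank ℚ K = 2)
    (himag : IsEmpty (K →+* ℝ))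
    (ℓ : ℕ) (hℓ : ℓ.Prime) (c : ℕ) (hc : 0 < c) (hcop : Nat.Coprime c ℓ)
    (n : ℕ) (hn : 1 ≤ n) :
    -- {x ∈ K : ℓ_n · x ⊆ 𝒪_{cℓ^n}} = 𝒪_{cℓ^{n-1}}
    {x : K | ∀ y ∈ ellIdeal K ℓ c n, y * x ∈ ringOrder K (c * ℓ ^ n)} =
      (ringOrder K (c * ℓ ^ (n - 1)) : Set K) ∧
    -- consequently 𝒪_{cℓ^{n-1}}/𝒪_{cℓ^n} has order ℓ
    AddSubgroup.relIndex
      (Subalgebra.toSubmodule (ringOrder K (c * ℓ ^ n))).toAddSubgroup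
      (Subalgebra.toSubmodule (ringOrder K (c * ℓ ^ (n - 1)))).toAddSubgroup = ℓ :=
  stmt5_general K hdeg ℓ hℓ c hc n hn
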